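/- arXiv:2501.04476 — 3 statements merged into one kernel-verified Lean document; each statement's English description precedes it below -/
import Mathlib

section
/- Let $f, h : [0,1] \to \mathbb{R}$ be Lebesgue integrable and define $D : [0,1] \to \mathbb{R}$ by $D(x) = \operatorname{sgn}(f(x))\,h(x)$ if $f(x) \neq 0$ and $D(x) = |h(x)|$ if $f(x) = 0$. Then $\lim_{t \to 0^+} \int_0^1 \Big| \frac{|f(x)+t\,h(x)| - |f(x)|}{t} - D(x) \Big|\,dx = 0$; moreover the integrand is dominated: $\big|\frac{|f(x)+t h(x)|-|f(x)|}{t} - D(x)\big| \le 2|h(x)|$ for all $t > 0$ and all $x$. -/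
/-!
For fixed `a ≠ 0` the point `a + t * b` keeps the sign of `a` for small `t > 0`, so the difference
quotient `(|a + t * b| - |a|) / t` is eventually equal to `sign a * b`; for `a = 0` it equals `|b|`
for every `t > 0`. Both the quotient and its limit are bounded by `|b|`, so dominated convergence
with the integrable bound `2 * |h|` gives the `L¹` convergence.
-/

open MeasureTheory Filter Topology

/-- The right derivative at `0` of `t ↦ |a + t * b|`. -/
noncomputable def absDirDeriv (a b : ℝ) : ℝ :=
  if a ≠ 0 then Real.sign a * b else |b|

lemma Real.abs_sign_le_one (a : ℝ) : |Real.sign a| ≤ 1 := by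
  rcases Real.sign_apply_eq a with h | h | h <;> simp [h]

lemma abs_absDirDeriv_le (a b : ℝ) : |absDirDeriv a b| ≤ |b| := by
  unfold absDirDeriv
  split_ifs
  · rw [abs_mul]
    exact mul_le_of_le_one_left (abs_nonneg b) (Real.abs_sign_le_one a)
  · rw [abs_abs]

lemma abs_div_abs_add_mul_sub_abs_le {a b t : ℝ} (ht : 0 < t) :
    |(|a + t * b| - |a|) / t| ≤ |b| := by
  rw [abs_div, abs_of_pos ht, div_le_iff₀ ht]
  calc |(|a + t * b| - |a|)| ≤ |a + t * b - a| := abs_abs_sub_abs_le_abs_sub _ _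
    _ = |b| * t := by rw [add_sub_cancel_left, abs_mul, abs_of_pos ht, mul_comm]

lemma abs_diffQuot_sub_absDirDeriv_le {a b t : ℝ} (ht : 0 < t) :
    |(|a + t * b| - |a|) / t - absDirDeriv a b| ≤ 2 * |b| :=
  calc |(|a + t * b| - |a|) / t - absDirDeriv a b|
      ≤ |(|a + t * b| - |a|) / t| + |absDirDeriv a b| := abs_sub _ _
    _ ≤ |b| + |b| := add_le_add (abs_div_abs_add_mul_sub_abs_le ht) (abs_absDirDeriv_le a b)
    _ = 2 * |b| := (two_mul _).symm

lemma eventually_diffQuot_eq_absDirDeriv (a b : ℝ) :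
    ∀ᶠ t in 𝓝[>] 0, (|a + t * b| - |a|) / t = absDirDeriv a b := by
  have hlim : Tendsto (fun t : ℝ => a + t * b) (𝓝[>] 0) (𝓝 a) := by
    refine tendsto_nhdsWithin_of_tendsto_nhds ?_
    exact (by fun_prop : Continuous fun t : ℝ => a + t * b).tendsto' 0 a (by simp)
  rcases lt_trichotomy a 0 with ha | rfl | ha
  · filter_upwards [self_mem_nhdsWithin, hlim.eventually (gt_mem_nhds ha)]
      with t (ht : 0 < t) hneg
    rw [absDirDeriv, if_pos ha.ne, Real.sign_of_neg ha, abs_of_neg hneg, abs_of_neg ha]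
    field_simp
    ring
  · filter_upwards [self_mem_nhdsWithin] with t (ht : 0 < t)
    rw [absDirDeriv, if_neg (not_not.2 rfl), zero_add, abs_zero, sub_zero, abs_mul,
      abs_of_pos ht, mul_div_cancel_left₀ _ ht.ne']
  · filter_upwards [self_mem_nhdsWithin, hlim.eventually (lt_mem_nhds ha)]
      with t (ht : 0 < t) hpos
    rw [absDirDeriv, if_pos ha.ne', Real.sign_of_pos ha, abs_of_pos hpos, abs_of_pos ha]
    field_simp
    ring

lemma Real.measurable_sign : Measurable Real.sign :=
  Measurable.ite (measurableSet_lt measurable_id measurable_const) measurable_const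
    (Measurable.ite (measurableSet_lt measurable_const measurable_id) measurable_const
      measurable_const)

@[fun_prop]
lemma measurable_absDirDeriv : Measurable fun p : ℝ × ℝ => absDirDeriv p.1 p.2 :=
  Measurable.ite ((measurableSet_singleton 0).compl.preimage measurable_fst)
    ((Real.measurable_sign.comp measurable_fst).mul measurable_snd) measurable_snd.abs

theorem tendsto_integral_abs_diffQuot_sub_absDirDeriv {α : Type*} [MeasurableSpace α]
    {μ : Measure α} {f h : α → ℝ} (hf : AEStronglyMeasurable f μ) (hh : Integrable h μ) :
    Tendsto (fun t => ∫ x, |(|f x + t * h x| - |f x|) / t - absDirDeriv (f x) (h x)| ∂μ)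
      (𝓝[>] 0) (𝓝 0) := by
  have hmeas (t : ℝ) : AEStronglyMeasurable
      (fun x => |(|f x + t * h x| - |f x|) / t - absDirDeriv (f x) (h x)|) μ := by
    have : Measurable fun p : ℝ × ℝ =>
        |(|p.1 + t * p.2| - |p.1|) / t - absDirDeriv p.1 p.2| := by
      fun_prop
    exact (this.comp_aemeasurable (hf.aemeasurable.prodMk hh.aemeasurable)).aestronglyMeasurable
  simpa using tendsto_integral_filter_of_dominated_convergence (f := fun _ => 0)
    (fun x => 2 * |h x|)
    (Eventually.of_forall hmeas)
    (by filter_upwards [self_mem_nhdsWithin] with t (ht : 0 < t)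
        exact Eventually.of_forall fun x => by
          simpa using abs_diffQuot_sub_absDirDeriv_le (a := f x) (b := h x) ht)
    (hh.abs.const_mul 2)
    (Eventually.of_forall fun x => tendsto_const_nhds.congr' <|
      (eventually_diffQuot_eq_absDirDeriv (f x) (h x)).mono fun t ht => by simp [ht])

/-- `L¹`-convergence of the difference quotients of the pointwise absolute value map:
with `D(x) = sgn(f(x)) h(x)` if `f(x) ≠ 0` and `D(x) = |h(x)|` otherwise,
`∫₀¹ |(|f+th| - |f|)/t - D| → 0` as `t → 0⁺`, and the integrand is dominated by `2|h|`. -/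
theorem abs_diff_quotient_L1_tendsto (f h : ℝ → ℝ)
    (hf : IntegrableOn f (Set.Icc (0 : ℝ) 1)) (hh : IntegrableOn h (Set.Icc (0 : ℝ) 1))
    (D : ℝ → ℝ)
    (hD : ∀ x, D x = if f x ≠ 0 then Real.sign (f x) * h x else |h x|) :
    Filter.Tendsto
      (fun t : ℝ => ∫ x in Set.Icc (0 : ℝ) 1, |((|f x + t * h x| - |f x|) / t - D x)|)
      (nhdsWithin 0 (Set.Ioi 0)) (nhds 0) ∧
    ∀ t : ℝ, 0 < t → ∀ x : ℝ, |((|f x + t * h x| - |f x|) / t - D x)| ≤ 2 * |h x| := by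
  obtain rfl : D = fun x => absDirDeriv (f x) (h x) := funext hD
  exact ⟨tendsto_integral_abs_diffQuot_sub_absDirDeriv hf.aestronglyMeasurable hh,
    fun t ht x => abs_diffQuot_sub_absDirDeriv_le ht⟩
end

section
/- Let $E = C([0,1], L^1[0,1])$ be the Banach space of continuous maps from $[0,1]$ to $L^1[0,1]$, with norm $\|G\|_{\infty,1} = \sup_{s\in[0,1]} \|G(s)\|_1$. Then $\|\cdot\|_{\infty,1}$ is directionally Hadamard differentiable at every $G \neq 0$: for every $H \in E$, every sequence $t_n \to 0$ with $t_n > 0$, and every sequence $H_n \to H$ in $E$, $\lim_{n\to\infty} \frac{\|G + t_n H_n\|_{\infty,1} - \|G\|_{\infty,1}}{t_n} = \sup_{s \in \mathcal{E}} \Big( \int_{\{x : G(s)(x) \neq 0\}} \operatorname{sgn}(G(s)(x))\, H(s)(x)\,dx + \int_{\{x : G(s)(x) = 0\}} |H(s)(x)|\,dx \Big)$, where $\mathcal{E} = \big\{ s \in [0,1] \,:\, \|G(s)\|_1 = \sup_{u\in[0,1]} \|G(u)\|_1 \big\}$. -/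
/-!
Pointwise, `(|a + t b| - |a|) / t` is eventually constant as `t → 0⁺`, equal to `sgn a · b` if
`a ≠ 0` and to `|b|` if `a = 0`; dominated convergence (with dominating function `|k|`) turns this
into the one-sided derivative of the `L¹` norm.

For the sup norm over a compact space this is Danskin's argument. A maximiser `s` of `‖G ·‖`
bounds the difference quotients of `‖G‖` from below by those of `‖G s‖`. For the upper bound,
convexity of `t ↦ ‖a + t • k‖` makes all difference quotients monotone in `t`, and a cluster
point, as `t → 0⁺`, of maximisers of `‖(G + t • H) ·‖` is a maximiser `s` of `‖G ·‖` such that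
every lower bound of the quotients of `‖G‖` is also one of the quotients of `‖G s‖`.

Finally, the norm is `1`-Lipschitz, so replacing `H` by `Hₙ` changes the quotient at `tₙ` by at
most `‖Hₙ - H‖`: the one-sided derivative is a Hadamard one.
-/

open MeasureTheory Filter Topology

section NormedSpace

variable {E : Type*} [SeminormedAddCommGroup E] [NormedSpace ℝ E]

theorem convexOn_norm_add_smul (a k : E) : ConvexOn ℝ Set.univ fun t : ℝ => ‖a + t • k‖ := by
  have h := (convexOn_univ_norm (E := E)).comp_affineMap (AffineMap.lineMap a (a + k))
  simp only [Set.preimage_univ, Function.comp_def, AffineMap.lineMap_apply_module',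
    add_sub_cancel_left] at h
  simpa only [add_comm a] using h

theorem norm_add_smul_sub_norm_div_mono (a k : E) {s t : ℝ} (hs : 0 < s) (hst : s ≤ t) :
    (‖a + s • k‖ - ‖a‖) / s ≤ (‖a + t • k‖ - ‖a‖) / t := by
  simpa using (convexOn_norm_add_smul a k).secant_mono (a := 0) trivial trivial trivial
    hs.ne' (hs.trans_le hst).ne' hst

theorem abs_norm_add_smul_sub_norm_div_le (a k : E) {t : ℝ} (ht : 0 < t) :
    |(‖a + t • k‖ - ‖a‖) / t| ≤ ‖k‖ := by
  rw [abs_div, abs_of_pos ht, div_le_iff₀ ht]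
  simpa [norm_smul, abs_of_pos ht, mul_comm] using abs_norm_sub_norm_le (a + t • k) a

theorem tendsto_norm_add_smul_sub_norm_div_of_tendsto_nhdsGT {a k : E} {D : ℝ}
    (hD : Tendsto (fun t : ℝ => (‖a + t • k‖ - ‖a‖) / t) (𝓝[>] 0) (𝓝 D))
    {ι : Type*} {l : Filter ι} {t : ι → ℝ} {ks : ι → E} (ht0 : ∀ i, 0 < t i)
    (ht : Tendsto t l (𝓝 0)) (hks : Tendsto ks l (𝓝 k)) :
    Tendsto (fun i => (‖a + t i • ks i‖ - ‖a‖) / t i) l (𝓝 D) := by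
  refine (hD.comp (tendsto_nhdsWithin_iff.2 ⟨ht, .of_forall ht0⟩)).congr_dist ?_
  refine squeeze_zero (fun _ => dist_nonneg) (fun i => ?_)
    (tendsto_iff_norm_sub_tendsto_zero.1 hks)
  have hti := ht0 i
  rw [Real.dist_eq, Function.comp_apply, ← sub_div, sub_sub_sub_cancel_right, abs_div,
    abs_of_pos hti, div_le_iff₀ hti, norm_sub_rev]
  calc |‖a + t i • k‖ - ‖a + t i • ks i‖| ≤ ‖t i • k - t i • ks i‖ := by
        simpa using abs_norm_sub_norm_le (a + t i • k) (a + t i • ks i)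
    _ = ‖k - ks i‖ * t i := by rw [← smul_sub, norm_smul, Real.norm_of_nonneg hti.le, mul_comm]

end NormedSpace

namespace Real

theorem measurable_sign_s6 : Measurable Real.sign :=
  measurable_const.ite measurableSet_Iio (measurable_const.ite measurableSet_Ioi measurable_const)

theorem abs_sign_le_one_s6 (r : ℝ) : |Real.sign r| ≤ 1 := by
  rcases Real.sign_apply_eq r with h | h | h <;> simp [h]

theorem tendsto_abs_add_mul_sub_abs_div (a b : ℝ) :
    Tendsto (fun t => (|a + t * b| - |a|) / t) (𝓝[>] 0)
      (𝓝 (if a = 0 then |b| else Real.sign a * b)) := by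
  have hlim : Tendsto (fun t => a + t * b) (𝓝[>] 0) (𝓝 a) :=
    ((by fun_prop : Continuous fun t : ℝ => a + t * b).tendsto' 0 a (by simp)).mono_left
      nhdsWithin_le_nhds
  rcases lt_trichotomy a 0 with ha | rfl | ha
  · rw [if_neg ha.ne, Real.sign_of_neg ha]
    refine tendsto_const_nhds.congr' ?_
    filter_upwards [hlim.eventually (gt_mem_nhds ha), self_mem_nhdsWithin] with t hneg (ht : 0 < t)
    rw [abs_of_neg hneg, abs_of_neg ha]
    field_simp
    ring
  · rw [if_pos rfl]
    refine tendsto_const_nhds.congr' ?_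
    filter_upwards [self_mem_nhdsWithin] with t (ht : 0 < t)
    rw [zero_add, abs_zero, sub_zero, abs_mul, abs_of_pos ht, mul_div_cancel_left₀ _ ht.ne']
  · rw [if_neg ha.ne', Real.sign_of_pos ha]
    refine tendsto_const_nhds.congr' ?_
    filter_upwards [hlim.eventually (lt_mem_nhds ha), self_mem_nhdsWithin] with t hpos (ht : 0 < t)
    rw [abs_of_pos hpos, abs_of_pos ha]
    field_simp
    ring

end Real

namespace MeasureTheory.L1

variable {α : Type*} [MeasurableSpace α] {μ : Measure α}

noncomputable def normDirDeriv (f k : α →₁[μ] ℝ) : ℝ :=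
  (∫ x in {x | f x ≠ 0}, Real.sign (f x) * k x ∂μ) + ∫ x in {x | f x = 0}, |k x| ∂μ

theorem normDirDeriv_eq_integral (f k : α →₁[μ] ℝ) :
    normDirDeriv f k = ∫ x, (if f x = 0 then |k x| else Real.sign (f x) * k x) ∂μ := by
  have hS : MeasurableSet {x | f x = 0} :=
    (Lp.stronglyMeasurable f).measurable (measurableSet_singleton 0)
  have hsign : Integrable (fun x => Real.sign (f x) * k x) μ :=
    (L1.integrable_coeFn k).bdd_mul
      (Real.measurable_sign_s6.comp (Lp.stronglyMeasurable f).measurable).aestronglyMeasurable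
      (.of_forall fun x => by simpa using Real.abs_sign_le_one_s6 (f x))
  classical
  rw [normDirDeriv, add_comm, ← Set.compl_ofPred,
    ← integral_piecewise hS (L1.integrable_coeFn k).abs.integrableOn hsign.integrableOn]
  rfl

theorem norm_add_smul_eq_integral (f k : α →₁[μ] ℝ) (t : ℝ) :
    ‖f + t • k‖ = ∫ x, |f x + t * k x| ∂μ := by
  rw [L1.norm_eq_integral_norm]
  refine integral_congr_ae ?_
  filter_upwards [Lp.coeFn_add f (t • k), Lp.coeFn_smul t k] with x hadd hsmul
  rw [hadd, Pi.add_apply, hsmul, Pi.smul_apply, smul_eq_mul, Real.norm_eq_abs]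

theorem tendsto_norm_add_smul_sub_norm_div (f k : α →₁[μ] ℝ) :
    Tendsto (fun t : ℝ => (‖f + t • k‖ - ‖f‖) / t) (𝓝[>] 0) (𝓝 (normDirDeriv f k)) := by
  have hf := L1.integrable_coeFn f
  have hk := L1.integrable_coeFn k
  have hquot : ∀ t, (‖f + t • k‖ - ‖f‖) / t = ∫ x, (|f x + t * k x| - |f x|) / t ∂μ := by
    intro t
    have hfk : Integrable (fun x => |f x + t * k x|) μ := (hf.add (hk.const_mul t)).abs
    rw [integral_div, MeasureTheory.integral_sub hfk hf.abs,
      ← norm_add_smul_eq_integral, L1.norm_eq_integral_norm f]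
    simp only [Real.norm_eq_abs]
  simp_rw [hquot, normDirDeriv_eq_integral]
  refine tendsto_integral_filter_of_dominated_convergence (fun x => |k x|) ?_ ?_ hk.abs
    (.of_forall fun x => Real.tendsto_abs_add_mul_sub_abs_div (f x) (k x))
  · exact .of_forall fun t =>
      (((hf.add (hk.const_mul t)).abs.sub hf.abs).div_const t).aestronglyMeasurable
  · filter_upwards [self_mem_nhdsWithin] with t (ht : 0 < t)
    refine .of_forall fun x => ?_
    simpa only [Real.norm_eq_abs, smul_eq_mul] using
      abs_norm_add_smul_sub_norm_div_le (f x) (k x) ht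

end MeasureTheory.L1

namespace ContinuousMap

variable {X E : Type*} [TopologicalSpace X] [CompactSpace X] [SeminormedAddCommGroup E]

theorem norm_le_norm_apply_add_two_mul {G K : C(X, E)} {x : X} (hx : ‖(G + K) x‖ = ‖G + K‖) :
    ‖G‖ ≤ ‖G x‖ + 2 * ‖K‖ :=
  calc ‖G‖ ≤ ‖G + K‖ + ‖K‖ := by simpa using norm_sub_le (G + K) K
    _ = ‖G x + K x‖ + ‖K‖ := by rw [← hx, add_apply]
    _ ≤ ‖G x‖ + ‖K x‖ + ‖K‖ := by gcongr; exact norm_add_le _ _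
    _ ≤ ‖G x‖ + ‖K‖ + ‖K‖ := by gcongr; exact K.norm_coe_le_norm x
    _ = ‖G x‖ + 2 * ‖K‖ := by ring

variable [Nonempty X]

theorem exists_norm_apply_eq_norm (f : C(X, E)) : ∃ x, ‖f x‖ = ‖f‖ := by
  obtain ⟨x, -, hx⟩ := isCompact_univ.exists_isMaxOn Set.univ_nonempty
    (map_continuous f).norm.continuousOn
  exact ⟨x, le_antisymm (f.norm_coe_le_norm x) ((f.norm_le (norm_nonneg _)).2 fun y => hx trivial)⟩

variable [NormedSpace ℝ E]

theorem exists_norm_apply_eq_norm_forall_le_div {G H : C(X, E)} {a : ℝ}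
    (ha : ∀ t > 0, a ≤ (‖G + t • H‖ - ‖G‖) / t) :
    ∃ s, ‖G s‖ = ‖G‖ ∧ ∀ τ > 0, a ≤ (‖G s + τ • H s‖ - ‖G s‖) / τ := by
  choose σ hσ using fun t : ℝ => (G + t • H).exists_norm_apply_eq_norm
  obtain ⟨s, -, hs⟩ := isCompact_univ.exists_mapClusterPt (f := 𝓝[>] (0 : ℝ)) (u := σ)
    (by simp)
  have key : ∀ τ > 0, ‖G‖ ≤ ‖G s‖ + 2 * (τ * ‖H‖) ∧
      a ≤ (‖G s + τ • H s‖ - ‖G s‖) / τ := by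
    intro τ hτ
    refine IsClosed.mem_of_mapClusterPt (s := {u | ‖G‖ ≤ ‖G u‖ + 2 * (τ * ‖H‖) ∧
      a ≤ (‖G u + τ • H u‖ - ‖G u‖) / τ}) ?_ hs ?_
    · exact (isClosed_le continuous_const ((map_continuous G).norm.add continuous_const)).inter
        (isClosed_le continuous_const
          (by fun_prop : Continuous fun u => (‖G u + τ • H u‖ - ‖G u‖) / τ))
    filter_upwards [Ioc_mem_nhdsGT hτ] with t ⟨ht, htτ⟩
    constructor
    · calc ‖G‖ ≤ ‖G (σ t)‖ + 2 * ‖t • H‖ := norm_le_norm_apply_add_two_mul (hσ t)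
        _ ≤ ‖G (σ t)‖ + 2 * (τ * ‖H‖) := by
          rw [norm_smul, Real.norm_of_nonneg ht.le]; gcongr
    · calc a ≤ (‖G + t • H‖ - ‖G‖) / t := ha t ht
        _ ≤ (‖G (σ t) + t • H (σ t)‖ - ‖G (σ t)‖) / t := by
          rw [← hσ t, add_apply, smul_apply]; gcongr; exact G.norm_coe_le_norm _
        _ ≤ _ := norm_add_smul_sub_norm_div_mono _ _ ht htτ
  refine ⟨s, le_antisymm (G.norm_coe_le_norm s) ?_, fun τ hτ => (key τ hτ).2⟩
  have hlim : Tendsto (fun τ : ℝ => ‖G s‖ + 2 * (τ * ‖H‖)) (𝓝[>] 0) (𝓝 ‖G s‖) :=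
    ((by fun_prop : Continuous fun τ : ℝ => ‖G s‖ + 2 * (τ * ‖H‖)).tendsto' 0 _
      (by simp)).mono_left nhdsWithin_le_nhds
  exact ge_of_tendsto hlim (eventually_mem_nhdsWithin.mono fun τ hτ => (key τ hτ).1)

theorem tendsto_norm_add_smul_sub_norm_div (G H : C(X, E)) {D : X → ℝ}
    (hD : ∀ s, Tendsto (fun t : ℝ => (‖G s + t • H s‖ - ‖G s‖) / t) (𝓝[>] 0) (𝓝 (D s))) :
    Tendsto (fun t : ℝ => (‖G + t • H‖ - ‖G‖) / t) (𝓝[>] 0)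
      (𝓝 (⨆ s : {s | ‖G s‖ = ‖G‖}, D s)) := by
  obtain ⟨s₀, hs₀⟩ := G.exists_norm_apply_eq_norm
  have : Nonempty {s | ‖G s‖ = ‖G‖} := ⟨⟨s₀, hs₀⟩⟩
  have hbdd : BddAbove (Set.range fun s : {s | ‖G s‖ = ‖G‖} => D s) := by
    refine ⟨‖H‖, Set.forall_mem_range.2 fun s => le_of_tendsto (hD s) ?_⟩
    filter_upwards [self_mem_nhdsWithin] with t (ht : 0 < t)
    exact (le_abs_self _).trans ((abs_norm_add_smul_sub_norm_div_le _ _ ht).trans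
      (H.norm_coe_le_norm s))
  refine tendsto_order.2 ⟨fun a ha => ?_, fun a ha => ?_⟩
  · obtain ⟨⟨s, hs⟩, has⟩ := exists_lt_of_lt_ciSup ha
    filter_upwards [(hD s).eventually (lt_mem_nhds has), self_mem_nhdsWithin] with t hat ht
    refine hat.trans_le ?_
    rw [hs]
    exact div_le_div_of_nonneg_right (sub_le_sub_right ((G + t • H).norm_coe_le_norm s) _) ht.le
  · by_contra hev
    have hle : ∀ t > 0, a ≤ (‖G + t • H‖ - ‖G‖) / t := by
      intro t ht
      by_contra! hlt
      refine hev ?_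
      filter_upwards [Ioc_mem_nhdsGT ht] with u ⟨hu, hut⟩
      exact (norm_add_smul_sub_norm_div_mono _ _ hu hut).trans_lt hlt
    obtain ⟨s, hs, has⟩ := exists_norm_apply_eq_norm_forall_le_div hle
    have hDs : a ≤ D s := ge_of_tendsto (hD s) (eventually_mem_nhdsWithin.mono has)
    exact (hDs.trans (le_ciSup hbdd ⟨s, hs⟩)).not_gt ha

end ContinuousMap

theorem sup_L1_norm_hadamard_diff_general
    (G H : C(Set.Icc (0 : ℝ) 1, Lp ℝ 1 (volume.restrict (Set.Icc (0 : ℝ) 1))))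
    (t : ℕ → ℝ) (ht0 : ∀ n, 0 < t n) (htlim : Filter.Tendsto t Filter.atTop (nhds 0))
    (Hs : ℕ → C(Set.Icc (0 : ℝ) 1, Lp ℝ 1 (volume.restrict (Set.Icc (0 : ℝ) 1))))
    (hHlim : Filter.Tendsto Hs Filter.atTop (nhds H)) :
    Filter.Tendsto (fun n => (‖G + t n • Hs n‖ - ‖G‖) / t n) Filter.atTop
      (nhds (⨆ s : {s : Set.Icc (0 : ℝ) 1 | ‖G s‖ = ⨆ u : Set.Icc (0 : ℝ) 1, ‖G u‖},
        (∫ x in {x : ℝ | G (s : Set.Icc (0 : ℝ) 1) x ≠ 0},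
            Real.sign (G (s : Set.Icc (0 : ℝ) 1) x) * H (s : Set.Icc (0 : ℝ) 1) x
              ∂(volume.restrict (Set.Icc (0 : ℝ) 1)))
        + ∫ x in {x : ℝ | G (s : Set.Icc (0 : ℝ) 1) x = 0},
            |H (s : Set.Icc (0 : ℝ) 1) x|
              ∂(volume.restrict (Set.Icc (0 : ℝ) 1)))) := by
  rw [← ContinuousMap.norm_eq_iSup_norm]
  exact tendsto_norm_add_smul_sub_norm_div_of_tendsto_nhdsGT
    (G.tendsto_norm_add_smul_sub_norm_div H fun s =>
      L1.tendsto_norm_add_smul_sub_norm_div (G s) (H s))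
    ht0 htlim hHlim

/-- Directional Hadamard differentiability of the norm `‖·‖_{∞,1}` on
`C([0,1], L¹[0,1])` at every `G ≠ 0`: for every direction `H`, every positive null
sequence `tₙ` and every `Hₙ → H`, the difference quotients converge to
`sup_{s ∈ 𝓔} ( ∫_{G(s)≠0} sgn(G(s)) H(s) + ∫_{G(s)=0} |H(s)| )`, where
`𝓔 = {s : ‖G(s)‖₁ = sup_u ‖G(u)‖₁}` is the argmax set. -/
theorem sup_L1_norm_hadamard_diff
    (G H : C(Set.Icc (0 : ℝ) 1, Lp ℝ 1 (volume.restrict (Set.Icc (0 : ℝ) 1))))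
    (hG : G ≠ 0)
    (t : ℕ → ℝ) (ht0 : ∀ n, 0 < t n) (htlim : Filter.Tendsto t Filter.atTop (nhds 0))
    (Hs : ℕ → C(Set.Icc (0 : ℝ) 1, Lp ℝ 1 (volume.restrict (Set.Icc (0 : ℝ) 1))))
    (hHlim : Filter.Tendsto Hs Filter.atTop (nhds H)) :
    Filter.Tendsto (fun n => (‖G + t n • Hs n‖ - ‖G‖) / t n) Filter.atTop
      (nhds (⨆ s : {s : Set.Icc (0 : ℝ) 1 | ‖G s‖ = ⨆ u : Set.Icc (0 : ℝ) 1, ‖G u‖},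
        (∫ x in {x : ℝ | G (s : Set.Icc (0 : ℝ) 1) x ≠ 0},
            Real.sign (G (s : Set.Icc (0 : ℝ) 1) x) * H (s : Set.Icc (0 : ℝ) 1) x
              ∂(volume.restrict (Set.Icc (0 : ℝ) 1)))
        + ∫ x in {x : ℝ | G (s : Set.Icc (0 : ℝ) 1) x = 0},
            |H (s : Set.Icc (0 : ℝ) 1) x|
              ∂(volume.restrict (Set.Icc (0 : ℝ) 1)))) :=
  sup_L1_norm_hadamard_diff_general G H t ht0 htlim Hs hHlim
end

section
/- Let $(\Omega, \mathcal{F}, P)$ be a probability space and let $f, g : \Omega \times [0,1] \to \mathbb{R}$ be jointly measurable with $\int_\Omega \int_0^1 |f(\omega,x)|\,dx\,dP(\omega) < \infty$ and $\int_\Omega \int_0^1 |g(\omega,x)|\,dx\,dP(\omega) < \infty$. Suppose the mean functions $F(x) = \int_\Omega f(\omega,x)\,dP(\omega)$ and $G(x) = \int_\Omega g(\omega,x)\,dP(\omega)$ are not equal almost everywhere on $[0,1]$. Then there exist $c > 0$ and $0 \le s < t \le 1$ such that $\int_s^t \Big(\int_\Omega \min(f(\omega,x), c)\,dP(\omega)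 - \int_\Omega \min(g(\omega,x), c)\,dP(\omega)\Big) dx \neq 0$. -/
open MeasureTheory Filter Set Metric


lemma aux_ae_zero (h : ℝ → ℝ) (hint : Integrable h (volume : Measure ℝ))
    (hz : ∀ a b : ℝ, a ≤ b → (∫ x in a..b, h x) = 0) : h =ᵐ[volume] 0 := by
  have hK := IsUnifLocDoublingMeasure.ae_tendsto_average (μ := (volume : Measure ℝ))
    hint.locallyIntegrable 1
  filter_upwards [hK] with x hx
  have hδ : Tendsto (fun n : ℕ => (1:ℝ)/(n+1)) atTop (nhdsWithin 0 (Ioi 0)) := by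
    apply tendsto_nhdsWithin_of_tendsto_nhds_of_eventually_within
    · exact tendsto_one_div_add_atTop_nhds_zero_nat
    · filter_upwards with n
      exact mem_Ioi.2 (by positivity)
  have hmem : ∀ᶠ j : ℕ in atTop, x ∈ closedBall x (1 * ((1:ℝ)/(j+1))) := by
    filter_upwards with j
    exact mem_closedBall_self (by positivity)
  have hlim := hx (fun _ => x) (fun n : ℕ => (1:ℝ)/(n+1)) hδ hmem
  have h0 : ∀ n : ℕ, (⨍ y in closedBall x ((1:ℝ)/(n+1)), h y ∂volume) = 0 := by
    intro n
    have hr : (0:ℝ) < 1/(n+1) := by positivity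
    have hle : x - 1/(n+1) ≤ x + 1/(n+1) := by linarith
    have e1 : (∫ y in closedBall x ((1:ℝ)/(n+1)), h y ∂volume) = 0 := by
      rw [Real.closedBall_eq_Icc, integral_Icc_eq_integral_Ioc,
        ← intervalIntegral.integral_of_le hle]
      exact hz _ _ hle
    rw [setAverage_eq, e1, smul_zero]
  have hc : Tendsto (fun j : ℕ => ⨍ y in closedBall x ((1:ℝ)/(j+1)), h y ∂volume) atTop (nhds 0) := by
    exact (tendsto_const_nhds : Tendsto (fun _ : ℕ => (0:ℝ)) atTop (nhds 0)).congr
      fun j => (h0 j).symm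
  exact (tendsto_nhds_unique hlim hc).trans rfl


lemma aux_ae_zero' (h : ℝ → ℝ) (hint : IntegrableOn h (Set.Icc 0 1) volume)
    (hz : ∀ s t : ℝ, 0 ≤ s → s < t → t ≤ 1 → (∫ x in s..t, h x) = 0) :
    h =ᵐ[volume.restrict (Set.Icc (0:ℝ) 1)] 0 := by
  set h' : ℝ → ℝ := (Set.Icc (0:ℝ) 1).indicator h with hh'
  have hint' : Integrable h' volume := hint.integrable_indicator measurableSet_Icc
  have hz' : ∀ a b : ℝ, a ≤ b → (∫ x in a..b, h' x) = 0 := by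
    intro a b hab
    rw [intervalIntegral.integral_of_le hab, hh', setIntegral_indicator measurableSet_Icc]
    set s' := max a 0 with hs'
    set t' := min b 1 with ht'
    rcases le_or_gt t' s' with hts | hst
    · have hsub : Ioc a b ∩ Icc 0 1 ⊆ {t'} := by
        intro x ⟨⟨hx1, hx2⟩, hx3, hx4⟩
        have h1 : s' ≤ x := max_le hx1.le hx3
        have h2 : x ≤ t' := le_min hx2 hx4
        simp only [mem_singleton_iff]
        linarith
      have h2 : volume.restrict (Ioc a b ∩ Icc 0 1) = 0 :=
        Measure.restrict_eq_zero.mpr (measure_mono_null hsub (measure_singleton _))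
      rw [h2, integral_zero_measure]
    · have heq : (Ioc a b ∩ Icc 0 1 : Set ℝ) =ᵐ[volume] Ioc s' t' := by
        rw [ae_eq_set]
        constructor
        · refine measure_mono_null ?_ (measure_singleton s')
          rintro x ⟨⟨⟨hx1, hx2⟩, hx3, hx4⟩, hmem⟩
          have h1 : s' ≤ x := max_le hx1.le hx3
          have h2 : x ≤ t' := le_min hx2 hx4
          simp only [mem_Ioc, not_and_or, not_lt, not_le] at hmem
          simp only [mem_singleton_iff]
          rcases hmem with hm | hm
          · linarith
          · linarith
        · refine measure_mono_null ?_ (measure_empty (μ := volume))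
          rintro x ⟨⟨hx1, hx2⟩, hmem⟩
          exact absurd ⟨⟨lt_of_le_of_lt (le_max_left a 0) hx1, hx2.trans (min_le_left b 1)⟩,
            (le_max_right a 0).trans hx1.le, hx2.trans (min_le_right b 1)⟩ hmem
      rw [setIntegral_congr_set heq, ← intervalIntegral.integral_of_le hst.le]
      exact hz s' t' (le_max_right a 0) hst (min_le_right b 1)
  have hz0 := aux_ae_zero h' hint' hz'
  have h1 : h =ᵐ[volume.restrict (Set.Icc (0:ℝ) 1)] h' := by
    rw [EventuallyEq, ae_restrict_iff' measurableSet_Icc]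
    filter_upwards with x hx
    rw [hh', Set.indicator_of_mem hx]
  exact h1.trans (ae_restrict_of_ae hz0)

/-- Separation property of the truncated integral functionals: if the mean functions
`F(x) = ∫ f(ω,x) dP` and `G(x) = ∫ g(ω,x) dP` of two jointly measurable, integrable
kernels are not a.e. equal on `[0,1]`, then there are a truncation level `c > 0` and an
interval `(s,t) ⊆ [0,1]` with
`∫_s^t (∫ min(f(ω,x),c) dP - ∫ min(g(ω,x),c) dP) dx ≠ 0`. -/
theorem truncated_functionals_separate
    {Ω : Type*} [MeasureSpace Ω] (P : Measure Ω) [IsProbabilityMeasure P]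
    (f g : Ω × ℝ → ℝ) (hf : Measurable f) (hg : Measurable g)
    (hfi : Integrable f (P.prod (volume.restrict (Set.Icc (0 : ℝ) 1))))
    (hgi : Integrable g (P.prod (volume.restrict (Set.Icc (0 : ℝ) 1))))
    (hne : ¬ (fun x => ∫ ω, f (ω, x) ∂P)
              =ᵐ[volume.restrict (Set.Icc (0 : ℝ) 1)] (fun x => ∫ ω, g (ω, x) ∂P)) :
    ∃ c > (0 : ℝ), ∃ s t : ℝ, 0 ≤ s ∧ s < t ∧ t ≤ 1 ∧
      (∫ x in s..t, ((∫ ω, min (f (ω, x)) c ∂P) - ∫ ω, min (g (ω, x)) c ∂P)) ≠ 0 := by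
  by_contra hcon
  push_neg at hcon
  have hFi : Integrable (fun x => ∫ ω, f (ω, x) ∂P) (volume.restrict (Set.Icc (0:ℝ) 1)) :=
    hfi.integral_prod_right
  have hGi : Integrable (fun x => ∫ ω, g (ω, x) ∂P) (volume.restrict (Set.Icc (0:ℝ) 1)) :=
    hgi.integral_prod_right
  have habs : ∀ (a c : ℝ), 0 < c → |min a c| ≤ |a| := by
    intro a c hc
    rcases le_total a c with h | h
    · rw [min_eq_left h]
    · rw [min_eq_right h, abs_of_pos hc]
      exact h.trans (le_abs_self a)
  have key : ∀ s t : ℝ, 0 ≤ s → s < t → t ≤ 1 →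
      (∫ x in s..t, ((∫ ω, f (ω, x) ∂P) - ∫ ω, g (ω, x) ∂P)) = 0 := by
    intro s t hs hst ht
    have hsub : Set.Ioc s t ⊆ Set.Icc (0:ℝ) 1 := fun x hx => ⟨hs.trans hx.1.le, hx.2.trans ht⟩
    have hle : volume.restrict (Set.Ioc s t) ≤ volume.restrict (Set.Icc (0:ℝ) 1) :=
      Measure.restrict_mono hsub le_rfl
    have hfae : ∀ᵐ x ∂volume.restrict (Set.Ioc s t), Integrable (fun ω => f (ω, x)) P :=
      ae_mono hle hfi.prod_left_ae
    have hgae : ∀ᵐ x ∂volume.restrict (Set.Ioc s t), Integrable (fun ω => g (ω, x)) P :=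
      ae_mono hle hgi.prod_left_ae
    have hBint : Integrable (fun x => (∫ ω, ‖f (ω, x)‖ ∂P) + ∫ ω, ‖g (ω, x)‖ ∂P)
        (volume.restrict (Set.Ioc s t)) :=
      ((hfi.integral_norm_prod_right).add hgi.integral_norm_prod_right).mono_measure hle
    have hmeas : ∀ c : ℝ, AEStronglyMeasurable
        (fun x => (∫ ω, min (f (ω, x)) c ∂P) - ∫ ω, min (g (ω, x)) c ∂P)
        (volume.restrict (Set.Ioc s t)) := fun c =>
      (((hf.min measurable_const).stronglyMeasurable.integral_prod_left').sub
        ((hg.min measurable_const).stronglyMeasurable.integral_prod_left')).aestronglyMeasurable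
    have hbound : ∀ n : ℕ, ∀ᵐ x ∂volume.restrict (Set.Ioc s t),
        ‖(∫ ω, min (f (ω, x)) ((n:ℝ)+1) ∂P) - ∫ ω, min (g (ω, x)) ((n:ℝ)+1) ∂P‖
          ≤ (∫ ω, ‖f (ω, x)‖ ∂P) + ∫ ω, ‖g (ω, x)‖ ∂P := by
      intro n
      filter_upwards [hfae, hgae] with x hfx hgx
      have hn : (0:ℝ) < (n:ℝ) + 1 := by positivity
      have e1 : (∫ ω, ‖min (f (ω, x)) ((n:ℝ)+1)‖ ∂P) ≤ ∫ ω, ‖f (ω, x)‖ ∂P := by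
        refine integral_mono_of_nonneg (Filter.Eventually.of_forall fun ω => norm_nonneg _)
          hfx.norm (Filter.Eventually.of_forall fun ω => ?_)
        simpa [Real.norm_eq_abs] using habs (f (ω, x)) _ hn
      have e2 : (∫ ω, ‖min (g (ω, x)) ((n:ℝ)+1)‖ ∂P) ≤ ∫ ω, ‖g (ω, x)‖ ∂P := by
        refine integral_mono_of_nonneg (Filter.Eventually.of_forall fun ω => norm_nonneg _)
          hgx.norm (Filter.Eventually.of_forall fun ω => ?_)
        simpa [Real.norm_eq_abs] using habs (g (ω, x)) _ hn
      calc ‖(∫ ω, min (f (ω, x)) ((n:ℝ)+1) ∂P) - ∫ ω, min (g (ω, x)) ((n:ℝ)+1) ∂P‖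
          ≤ ‖∫ ω, min (f (ω, x)) ((n:ℝ)+1) ∂P‖ + ‖∫ ω, min (g (ω, x)) ((n:ℝ)+1) ∂P‖ :=
            norm_sub_le _ _
        _ ≤ (∫ ω, ‖min (f (ω, x)) ((n:ℝ)+1)‖ ∂P) + ∫ ω, ‖min (g (ω, x)) ((n:ℝ)+1)‖ ∂P :=
            add_le_add (norm_integral_le_integral_norm _) (norm_integral_le_integral_norm _)
        _ ≤ _ := add_le_add e1 e2
    have hptwise : ∀ᵐ x ∂volume.restrict (Set.Ioc s t),
        Filter.Tendsto (fun n : ℕ =>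
            (∫ ω, min (f (ω, x)) ((n:ℝ)+1) ∂P) - ∫ ω, min (g (ω, x)) ((n:ℝ)+1) ∂P)
          Filter.atTop (nhds ((∫ ω, f (ω, x) ∂P) - ∫ ω, g (ω, x) ∂P)) := by
      filter_upwards [hfae, hgae] with x hfx hgx
      have tr : ∀ (h : Ω × ℝ → ℝ), Measurable h → Integrable (fun ω => h (ω, x)) P →
          Filter.Tendsto (fun n : ℕ => ∫ ω, min (h (ω, x)) ((n:ℝ)+1) ∂P)
            Filter.atTop (nhds (∫ ω, h (ω, x) ∂P)) := by
        intro h hm hi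
        refine tendsto_integral_of_dominated_convergence (fun ω => ‖h (ω, x)‖)
          (fun n => ((hm.comp (measurable_id.prodMk measurable_const)).min
            measurable_const).aestronglyMeasurable)
          hi.norm (fun n => Filter.Eventually.of_forall fun ω => ?_)
          (Filter.Eventually.of_forall fun ω => ?_)
        · simpa [Real.norm_eq_abs] using habs (h (ω, x)) _ (by positivity : (0:ℝ) < (n:ℝ)+1)
        · refine Filter.Tendsto.congr' ?_ tendsto_const_nhds
          filter_upwards [Filter.eventually_ge_atTop ⌈h (ω, x)⌉₊] with n hn
          rw [min_eq_left]
          calc h (ω, x) ≤ (⌈h (ω, x)⌉₊ : ℝ) := Nat.le_ceil _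
            _ ≤ (n : ℝ) := by exact_mod_cast hn
            _ ≤ (n : ℝ) + 1 := by linarith
      exact (tr f hf hfx).sub (tr g hg hgx)
    have hlim := tendsto_integral_of_dominated_convergence _ (fun n => hmeas _)
      hBint hbound hptwise
    have h0seq : ∀ n : ℕ,
        (∫ x in Set.Ioc s t, ((∫ ω, min (f (ω, x)) ((n:ℝ)+1) ∂P)
          - ∫ ω, min (g (ω, x)) ((n:ℝ)+1) ∂P) ∂volume) = 0 := by
      intro n
      rw [← intervalIntegral.integral_of_le hst.le]
      exact hcon ((n:ℝ)+1) (by positivity) s t hs hst ht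
    rw [intervalIntegral.integral_of_le hst.le]
    exact tendsto_nhds_unique hlim (tendsto_const_nhds.congr fun n => (h0seq n).symm)
  have hae := aux_ae_zero' (fun x => (∫ ω, f (ω, x) ∂P) - ∫ ω, g (ω, x) ∂P) (hFi.sub hGi) key
  apply hne
  filter_upwards [hae] with x hx
  exact sub_eq_zero.mp hx
end
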